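/- arXiv:1510.05576 — 3 statements merged into one kernel-verified Lean document; each statement's English description precedes it below -/
import Mathlib

section
/- For every real s ∈ (0,1], Σ_{i≥1 : 2^{−i} < s} 2^{−i} √(log i) < s − s log s. -/
/-!
Write `h t = t - t log t` and `L = log 2`. AM–GM gives `√(log i) ≤ (1 + log i) / 2`, and
`i ≤ 2^(i-1)` gives `log i ≤ (i - 1) L`, so
`2^(-i) √(log i) ≤ 2^(-(i+1)) (1 + (i - 1) L) = h(2^(-i)) - h(2^(-(i+1)))`.
Hence the sum telescopes to at most `h(2^(-n))`, where `n` is the least index with `2^(-n) < s`,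
and `h(2^(-n)) < h(s)` because `h' = -log > 0` on `(0, 1)`.
-/

open Real Finset

theorem Real.tsum_le_of_le_sub_succ {f ψ : ℕ → ℝ} (hf : ∀ i, 0 ≤ f i) (hψ : ∀ i, 0 ≤ ψ i)
    (hfψ : ∀ i, f i ≤ ψ i - ψ (i + 1)) : ∑' i, f i ≤ ψ 0 :=
  Real.tsum_le_of_sum_range_le hf fun N => calc
    ∑ i ∈ range N, f i ≤ ∑ i ∈ range N, (ψ i - ψ (i + 1)) := sum_le_sum fun i _ => hfψ i
    _ = ψ 0 - ψ N := sum_range_sub' ψ N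
    _ ≤ ψ 0 := sub_le_self _ (hψ N)

theorem Real.sqrt_le_one_add_div_two {y : ℝ} (hy : 0 ≤ y) : √y ≤ (1 + y) / 2 := by
  nlinarith [two_mul_le_add_sq (√y) 1, sq_sqrt hy]

theorem Real.log_natCast_le_mul_log_two {i : ℕ} (hi : 1 ≤ i) : log i ≤ (i - 1) * log 2 := by
  have hpow : (i : ℝ) ≤ 2 ^ (i - 1) := by
    have := Nat.lt_two_pow_self (n := i - 1)
    exact_mod_cast (show i ≤ 2 ^ (i - 1) by omega)
  calc log i ≤ log (2 ^ (i - 1)) := log_le_log (by exact_mod_cast hi) hpow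
    _ = (i - 1) * log 2 := by rw [log_pow, Nat.cast_sub hi, Nat.cast_one]

noncomputable def subMulLog (t : ℝ) : ℝ := t - t * log t

theorem strictMonoOn_subMulLog : StrictMonoOn subMulLog (Set.Icc 0 1) := by
  refine strictMonoOn_of_deriv_pos (convex_Icc 0 1)
    (continuous_id.sub continuous_mul_log).continuousOn fun t ht => ?_
  rw [interior_Icc] at ht
  have hderiv : HasDerivAt subMulLog (1 - (log t + 1)) t :=
    (hasDerivAt_id t).sub (hasDerivAt_mul_log ht.1.ne')
  rw [hderiv.deriv]
  linarith [log_neg ht.1 ht.2]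

theorem subMulLog_two_zpow (i : ℕ) :
    subMulLog (2 ^ (-(i : ℤ))) = 2 ^ (-(i : ℤ)) * (1 + i * log 2) := by
  rw [subMulLog, log_zpow]
  push_cast
  ring

theorem subMulLog_two_zpow_nonneg (i : ℕ) : 0 ≤ subMulLog (2 ^ (-(i : ℤ))) := by
  rw [subMulLog_two_zpow]
  positivity

theorem two_zpow_mul_sqrt_log_le {i : ℕ} (hi : 1 ≤ i) :
    (2 : ℝ) ^ (-(i : ℤ)) * √(log i) ≤
      subMulLog (2 ^ (-(i : ℤ))) - subMulLog (2 ^ (-((i + 1 : ℕ) : ℤ))) := by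
  have hsqrt := Real.sqrt_le_one_add_div_two (log_natCast_nonneg i)
  have hlog := Real.log_natCast_le_mul_log_two hi
  calc (2 : ℝ) ^ (-(i : ℤ)) * √(log i) ≤ 2 ^ (-(i : ℤ)) * ((1 + (i - 1) * log 2) / 2) := by
        gcongr
        linarith
    _ = _ := by
        rw [subMulLog_two_zpow, subMulLog_two_zpow, Nat.cast_add, Nat.cast_one, neg_add,
          zpow_add₀ two_ne_zero]
        push_cast
        ring

theorem sum_pow_sqrt_log_lt (s : ℝ) (hs₀ : 0 < s) (hs₁ : s ≤ 1) :
    (∑' i : ℕ, if 1 ≤ i ∧ (2 : ℝ) ^ (-(i : ℤ)) < s then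
        (2 : ℝ) ^ (-(i : ℤ)) * Real.sqrt (Real.log i) else 0) <
      s - s * Real.log s := by
  have hex : ∃ n : ℕ, 1 ≤ n ∧ (2 : ℝ) ^ (-(n : ℤ)) < s := by
    obtain ⟨k, hk⟩ := exists_pow_lt_of_lt_one hs₀ (by norm_num : (2 : ℝ)⁻¹ < 1)
    refine ⟨k + 1, by omega, lt_of_le_of_lt ?_ hk⟩
    rw [zpow_neg, zpow_natCast, ← inv_pow]
    exact pow_le_pow_of_le_one (by norm_num) (by norm_num) k.le_succ
  obtain ⟨hn₁, hns⟩ := Nat.find_spec hex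
  set n := Nat.find hex
  set ψ : ℕ → ℝ := fun i => subMulLog (2 ^ (-((max i n : ℕ) : ℤ)))
  calc _ ≤ ψ 0 := by
        refine Real.tsum_le_of_le_sub_succ (fun i => by positivity)
          (fun i => subMulLog_two_zpow_nonneg _) fun i => ?_
        rcases lt_or_ge i n with hin | hni
        · have hP := Nat.find_min hex hin
          simp only [ψ, hP, if_false, max_eq_right hin.le, max_eq_right (Nat.succ_le_of_lt hin),
            sub_self, le_refl]
        · have hbound := two_zpow_mul_sqrt_log_le (hn₁.trans hni)
          simp only [ψ, max_eq_left hni, max_eq_left (hni.trans i.le_succ)]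
          split_ifs
          · exact hbound
          · exact (by positivity : (0 : ℝ) ≤ _).trans hbound
    _ < subMulLog s := by
        refine strictMonoOn_subMulLog ⟨by positivity, ?_⟩ ⟨hs₀.le, hs₁⟩ (by simpa [ψ] using hns)
        exact zpow_le_one_of_nonpos₀ one_le_two (by omega)
end

section
/- Σ_{t=1}^n σ_t (c − log σ_t) ≤ √(n B) ( c + ½ log(n / B) ). -/
/-!
With `y = σ²` the summand is `φ(y) = √y (c - ½ log y)`, which is concave and, as long as
`log √y ≤ c - 1`, nondecreasing. Hence each summand lies below the tangent of `φ` at the average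
`B / n` permitted by the constraint, and summing the tangent bounds gives `n φ(B / n)`, which is
the right-hand side.
-/

open Finset Real

lemma sub_le_mul_log_div {x a : ℝ} (hx : 0 < x) (ha : 0 < a) : x - a ≤ x * log (x / a) := by
  have h := one_sub_inv_le_log_of_pos (div_pos hx ha)
  rw [inv_div] at h
  calc x - a = x * (1 - a / x) := by field_simp
    _ ≤ x * log (x / a) := mul_le_mul_of_nonneg_left h hx.le

/-- The tangent bound for `φ(y) = √y (c - ½ log y)` at `y = a²`, written in `x = √y`. -/
lemma mul_sub_log_le_tangent {x a c : ℝ} (hx : 0 < x) (ha : 0 < a) (hac : log a ≤ c - 1) :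
    x * (c - log x) ≤ a * (c - log a) + (c - 1 - log a) / (2 * a) * (x ^ 2 - a ^ 2) := by
  have hlog : log x = log a + log (x / a) := by rw [log_div hx.ne' ha.ne']; ring
  have hdiff : a * (c - log a) + (c - 1 - log a) / (2 * a) * (x ^ 2 - a ^ 2) - x * (c - log x)
      = ((c - 1 - log a) * (x - a) ^ 2 + 2 * a * (a - x + x * log (x / a))) / (2 * a) := by
    rw [hlog]
    field_simp
    ring
  have hnum : 0 ≤ (c - 1 - log a) * (x - a) ^ 2 + 2 * a * (a - x + x * log (x / a)) :=
    add_nonneg (mul_nonneg (sub_nonneg.2 hac) (sq_nonneg _))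
      (mul_nonneg (by positivity) (by linarith [sub_le_mul_log_div hx ha]))
  rw [← sub_nonneg, hdiff]
  exact div_nonneg hnum (by positivity)

lemma sum_mul_sub_log_le {ι : Type*} (s : Finset ι) (f : ι → ℝ) {a c : ℝ} (ha : 0 < a)
    (hac : log a ≤ c - 1) (hf : ∀ i ∈ s, 0 < f i) (hsq : ∑ i ∈ s, f i ^ 2 ≤ #s * a ^ 2) :
    ∑ i ∈ s, f i * (c - log (f i)) ≤ #s * (a * (c - log a)) := by
  set slope := (c - 1 - log a) / (2 * a)
  have hslope : 0 ≤ slope := div_nonneg (by linarith) (by positivity)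
  calc ∑ i ∈ s, f i * (c - log (f i))
      ≤ ∑ i ∈ s, (a * (c - log a) + slope * (f i ^ 2 - a ^ 2)) :=
        sum_le_sum fun i hi => mul_sub_log_le_tangent (hf i hi) ha hac
    _ = #s * (a * (c - log a)) + slope * (∑ i ∈ s, f i ^ 2 - #s * a ^ 2) := by
        rw [sum_add_distrib, sum_const, nsmul_eq_mul, ← mul_sum, sum_sub_distrib, sum_const,
          nsmul_eq_mul]
    _ ≤ #s * (a * (c - log a)) := by
        linarith [mul_nonpos_of_nonneg_of_nonpos hslope (sub_nonpos.2 hsq)]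

theorem sum_sigma_log_bound_general
    (n : ℕ) (c : ℝ) (hc : 1 ≤ c) (B : ℝ) (hB₀ : 0 < B) (hB : B ≤ n)
    (σ : ℕ → ℝ)
    (hσ₀ : ∀ t ∈ Finset.Icc 1 n, 0 < σ t)
    (hσB : ∑ t ∈ Finset.Icc 1 n, σ t ^ 2 ≤ B) :
    ∑ t ∈ Finset.Icc 1 n, σ t * (c - Real.log (σ t)) ≤
      Real.sqrt ((n : ℝ) * B) * (c + (1 / 2) * Real.log ((n : ℝ) / B)) := by
  have hn : (0 : ℝ) < n := hB₀.trans_le hB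
  have hcard : (#(Icc 1 n) : ℝ) = n := by simp
  set a := √B / √n
  have ha : 0 < a := by positivity
  have hna : (n : ℝ) * a = √(n * B) := by
    rw [sqrt_mul hn.le]; simp only [a]; field_simp; rw [sq_sqrt hn.le]
  have hna2 : (n : ℝ) * a ^ 2 = B := by
    rw [div_pow, sq_sqrt hB₀.le, sq_sqrt hn.le]; field_simp
  have hloga : log a = -(1 / 2) * log (n / B) := by
    rw [log_div (by positivity) (by positivity), log_sqrt hB₀.le, log_sqrt hn.le,
      log_div hn.ne' hB₀.ne']
    ring
  have hloga_nonpos : log a ≤ 0 := by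
    rw [hloga]; linarith [log_nonneg ((one_le_div hB₀).2 hB)]
  calc ∑ t ∈ Icc 1 n, σ t * (c - log (σ t)) ≤ n * (a * (c - log a)) := by
        rw [← hcard]
        exact sum_mul_sub_log_le _ σ ha (by linarith) hσ₀ (by rw [hcard, hna2]; exact hσB)
    _ = √(n * B) * (c + (1 / 2) * log (n / B)) := by rw [← hna, hloga]; ring

theorem sum_sigma_log_bound
    (n : ℕ) (hn : 1 ≤ n) (c : ℝ) (hc : 1 ≤ c) (B : ℝ) (hB₀ : 0 < B) (hB : B ≤ n)
    (σ : ℕ → ℝ)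
    (hσ₀ : ∀ t ∈ Finset.Icc 1 n, 0 < σ t)
    (hσ₁ : ∀ t ∈ Finset.Icc 1 n, σ t ≤ 1)
    (hσB : ∑ t ∈ Finset.Icc 1 n, σ t ^ 2 ≤ B) :
    ∑ t ∈ Finset.Icc 1 n, σ t * (c - Real.log (σ t)) ≤
      Real.sqrt ((n : ℝ) * B) * (c + (1 / 2) * Real.log ((n : ℝ) / B)) :=
  sum_sigma_log_bound_general n c hc B hB₀ hB σ hσ₀ hσB
end

section
/- Any greedy sequence terminates with a dominating set of G of cardinality k ≤ (1 + log(Δ + 1)) · γ(G), where log is the natural logarithm. -/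
/-!
Let `n j` be the number of vertices not yet dominated after `j` greedy steps and `γ = γ(G)`.
The closed neighbourhoods of a minimum dominating set cover these `n j` vertices, so one of
them contains at least `n j / γ` of them, and the greedy choice does at least as well:
`n (j + 1) ≤ (1 - 1/γ) n j ≤ e^{-1/γ} n j`. Starting from `n 0 ≤ (Δ + 1) γ`, after
`j = ⌈γ log (Δ + 1)⌉` steps at most `γ` vertices remain, strictly fewer unless
`j = γ log (Δ + 1)` (as `n j` is an integer), and each later step dominates at least one of them.
-/

noncomputable section

def dominatedSet {V : Type*} [Fintype V] [DecidableEq V] (G : SimpleGraph V)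
    [DecidableRel G.Adj] (S : Finset V) : Finset V :=
  Finset.univ.filter (fun u => u ∈ S ∨ ∃ w ∈ S, G.Adj u w)

def IsDominatingSet {V : Type*} (G : SimpleGraph V) (S : Finset V) : Prop :=
  ∀ v : V, v ∈ S ∨ ∃ u ∈ S, G.Adj v u

def dominationNumber {V : Type*} (G : SimpleGraph V) : ℕ :=
  sInf {m | ∃ S : Finset V, IsDominatingSet G S ∧ S.card = m}

end

open Finset Real

section Decay

variable {n : ℕ → ℕ} {γ k : ℕ}

theorem le_add_of_forall_succ_lt (hdec : ∀ j < k, n (j + 1) < n j) {j : ℕ} (hj : j ≤ k) :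
    k ≤ j + n j := by
  have hanti : ∀ i, j ≤ i → i ≤ k → i + n i ≤ j + n j := by
    intro i hji
    induction i, hji using Nat.le_induction with
    | base => exact fun _ => le_rfl
    | succ i _ ih =>
      intro hik
      have := hdec i hik
      have := ih (by omega)
      omega
  have := hanti k hj le_rfl
  omega

theorem cast_le_mul_exp_neg_of_decay (hγ : 0 < γ)
    (hstep : ∀ j < k, γ * n (j + 1) + n j ≤ γ * n j) :
    ∀ j ≤ k, (n j : ℝ) ≤ n 0 * exp (-(j / γ)) := by
  intro j
  induction j with
  | zero => simp
  | succ j ih =>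
    intro hj
    have hγR : (0 : ℝ) < γ := by exact_mod_cast hγ
    have hstepR : (γ : ℝ) * n (j + 1) + n j ≤ γ * n j := by exact_mod_cast hstep j hj
    have hexp : (γ : ℝ) - 1 ≤ γ * exp (-(1 / γ)) := by
      have := mul_le_mul_of_nonneg_left (Real.one_sub_le_exp_neg (1 / γ)) hγR.le
      rwa [mul_sub, mul_one, mul_one_div_cancel hγR.ne'] at this
    have hone : (n (j + 1) : ℝ) ≤ exp (-(1 / γ)) * n j := by
      refine le_of_mul_le_mul_left ?_ hγR
      linarith [mul_le_mul_of_nonneg_right hexp (Nat.cast_nonneg (α := ℝ) (n j))]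
    calc (n (j + 1) : ℝ) ≤ exp (-(1 / γ)) * (n 0 * exp (-(j / γ))) :=
          hone.trans (mul_le_mul_of_nonneg_left (ih (by omega)) (exp_pos _).le)
      _ = n 0 * exp (-((j + 1 : ℕ) / γ)) := by
          rw [mul_left_comm, ← exp_add]
          push_cast
          ring_nf

theorem natCast_add_le_of_le_mul_exp_neg {m γ : ℕ} {r : ℝ} (hγ : 0 < γ) (hr₀ : 0 ≤ r)
    (hr₁ : r < 1) (h : (m : ℝ) ≤ γ * exp (-(r / γ))) : m + r ≤ γ := by
  rcases hr₀.eq_or_lt with rfl | hr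
  · simpa using h
  have hγR : (0 : ℝ) < γ := by exact_mod_cast hγ
  have hexp : exp (-(r / γ)) < 1 := exp_lt_one_iff.2 (neg_neg_of_pos (div_pos hr hγR))
  have hlt : (m : ℝ) < γ := h.trans_lt (mul_lt_of_lt_one_right hγR hexp)
  have : m + 1 ≤ γ := by exact_mod_cast hlt
  have : (m : ℝ) + 1 ≤ γ := by exact_mod_cast this
  linarith

theorem le_one_add_log_mul_of_decay {c : ℝ} (hc : 1 ≤ c) (h0 : (n 0 : ℝ) ≤ c * γ)
    (hpos : ∀ j < k, 0 < n j) (hstep : ∀ j < k, γ * n (j + 1) + n j ≤ γ * n j) :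
    (k : ℝ) ≤ (1 + log c) * γ := by
  have hdec : ∀ j < k, n (j + 1) < n j := fun j hj =>
    Nat.lt_of_mul_lt_mul_left (a := γ) (by have := hstep j hj; have := hpos j hj; omega)
  rcases Nat.eq_zero_or_pos γ with rfl | hγ
  · have : k ≤ 0 + n 0 := le_add_of_forall_succ_lt hdec (Nat.zero_le k)
    simp only [Nat.cast_zero, mul_zero, Nat.cast_nonpos] at h0
    simp [show k = 0 by omega]
  set x := γ * log c
  have hx : 0 ≤ x := by have := log_nonneg hc; positivity
  rw [show (1 + log c) * γ = γ + x by ring]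
  rcases lt_or_ge k ⌈x⌉₊ with hk | hk
  · linarith [Nat.lt_ceil.1 hk, Nat.cast_nonneg (α := ℝ) γ]
  set j := ⌈x⌉₊
  have hγR : (0 : ℝ) < γ := by exact_mod_cast hγ
  have hnj : (n j : ℝ) ≤ γ * exp (-((j - x) / γ)) := by
    calc (n j : ℝ) ≤ c * γ * exp (-(j / γ)) :=
          (cast_le_mul_exp_neg_of_decay hγ hstep j hk).trans
            (mul_le_mul_of_nonneg_right h0 (exp_pos _).le)
      _ = γ * exp (-((j - x) / γ)) := by
          rw [show -((j - x) / γ) = log c + -(j / γ) by field_simp [x]; ring, exp_add,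
            exp_log (by linarith)]
          ring
  have hrem := natCast_add_le_of_le_mul_exp_neg hγ (sub_nonneg.2 (Nat.le_ceil x))
    (by linarith [Nat.ceil_lt_add_one hx]) hnj
  have hkj : (k : ℝ) ≤ j + n j := by exact_mod_cast le_add_of_forall_succ_lt hdec hk
  linarith

end Decay

section Domination

variable {V : Type*} (G : SimpleGraph V)

theorem exists_isDominatingSet_card_eq_dominationNumber [Fintype V] :
    ∃ S : Finset V, IsDominatingSet G S ∧ #S = dominationNumber G :=
  Nat.sInf_mem (s := {m | ∃ S : Finset V, IsDominatingSet G S ∧ #S = m})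
    ⟨_, univ, fun u => Or.inl (mem_univ u), rfl⟩

variable [DecidableRel G.Adj]

theorem card_filter_closedNbhd_le_maxDegree_add_one [Fintype V] [DecidableEq V] (s : V) :
    #(univ.filter fun u => u = s ∨ G.Adj u s) ≤ G.maxDegree + 1 := by
  calc #(univ.filter fun u => u = s ∨ G.Adj u s) ≤ #(insert s (G.neighborFinset s)) := by
        refine card_le_card fun u hu => ?_
        rcases (mem_filter.1 hu).2 with rfl | hadj
        · exact mem_insert_self u _
        · exact mem_insert_of_mem ((G.mem_neighborFinset s u).2 hadj.symm)
    _ ≤ G.degree s + 1 := G.card_neighborFinset_eq_degree s ▸ card_insert_le _ _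
    _ ≤ G.maxDegree + 1 := Nat.add_le_add_right (G.degree_le_maxDegree s) 1

variable {G} [DecidableEq V]

theorem IsDominatingSet.card_le_card_mul {S : Finset V} (hS : IsDominatingSet G S)
    (T : Finset V) {m : ℕ} (hm : ∀ s ∈ S, #(T.filter fun u => u = s ∨ G.Adj u s) ≤ m) :
    #T ≤ #S * m := by
  refine (card_le_card fun u hu => ?_).trans (card_biUnion_le_card_mul S _ m hm)
  rcases hS u with huS | ⟨s, hs, hadj⟩
  · exact mem_biUnion.2 ⟨u, huS, mem_filter.2 ⟨hu, Or.inl rfl⟩⟩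
  · exact mem_biUnion.2 ⟨s, hs, mem_filter.2 ⟨hu, Or.inr hadj⟩⟩

variable [Fintype V]

theorem isDominatingSet_of_dominatedSet_eq_univ {S : Finset V}
    (hS : dominatedSet G S = univ) : IsDominatingSet G S := fun u =>
  (mem_filter.1 (hS ▸ mem_univ u : u ∈ dominatedSet G S)).2

theorem mem_dominatedSet_insert {S : Finset V} {w u : V} :
    u ∈ dominatedSet G (insert w S) ↔ u ∈ dominatedSet G S ∨ u = w ∨ G.Adj u w := by
  simp only [dominatedSet, mem_filter, mem_univ, true_and, mem_insert, exists_eq_or_imp]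
  aesop

theorem card_sdiff_dominatedSet_insert_add (S : Finset V) (w : V) :
    #(univ \ dominatedSet G (insert w S)) +
        #((univ \ dominatedSet G S).filter fun u => u = w ∨ G.Adj u w) =
      #(univ \ dominatedSet G S) := by
  have : univ \ dominatedSet G (insert w S) =
      (univ \ dominatedSet G S).filter fun u => ¬(u = w ∨ G.Adj u w) := by
    ext u
    simp only [mem_sdiff, mem_univ, true_and, mem_filter, mem_dominatedSet_insert]
    tauto
  rw [this, add_comm, card_filter_add_card_filter_not]

end Domination

theorem greedy_dominating_set_bound
    {V : Type*} [Fintype V] [DecidableEq V]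
    (G : SimpleGraph V) [DecidableRel G.Adj]
    (k : ℕ) (v : ℕ → V)
    -- the greedy choice: `v j` (the `(j+1)`-st chosen vertex) maximizes the number
    -- of not-yet-dominated vertices in its closed neighborhood
    (hgreedy : ∀ j < k, ∀ w : V,
      ((Finset.univ \ dominatedSet G ((Finset.range j).image v)).filter
          (fun u => u = w ∨ G.Adj u w)).card ≤
        ((Finset.univ \ dominatedSet G ((Finset.range j).image v)).filter
          (fun u => u = v j ∨ G.Adj u (v j))).card)
    -- the sequence stops at the first index `k` at which everything is dominated
    (hstop : dominatedSet G ((Finset.range k).image v) = Finset.univ)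
    (hfirst : ∀ j < k, dominatedSet G ((Finset.range j).image v) ≠ Finset.univ) :
    IsDominatingSet G ((Finset.range k).image v) ∧
      (k : ℝ) ≤ (1 + Real.log ((G.maxDegree : ℝ) + 1)) * dominationNumber G := by
  refine ⟨isDominatingSet_of_dominatedSet_eq_univ hstop, ?_⟩
  obtain ⟨S, hS, hScard⟩ := exists_isDominatingSet_card_eq_dominationNumber G
  set n : ℕ → ℕ := fun j => #(univ \ dominatedSet G ((range j).image v))
  set gain : ℕ → ℕ := fun j => #((univ \ dominatedSet G ((range j).image v)).filter
    fun u => u = v j ∨ G.Adj u (v j))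
  have hsplit (j : ℕ) : n (j + 1) + gain j = n j := by
    simpa only [n, gain, range_add_one, image_insert] using
      card_sdiff_dominatedSet_insert_add ((range j).image v) (v j)
  have hcover (j : ℕ) (hj : j < k) : n j ≤ dominationNumber G * gain j :=
    hScard ▸ hS.card_le_card_mul _ fun s _ => hgreedy j hj s
  have hn0 : n 0 ≤ (G.maxDegree + 1) * dominationNumber G := by
    rw [mul_comm, ← hScard]
    exact (card_le_univ _).trans
      (hS.card_le_card_mul univ fun s _ => card_filter_closedNbhd_le_maxDegree_add_one G s)
  refine le_one_add_log_mul_of_decay (by simp) (by exact_mod_cast hn0) (fun j hj => ?_) ?_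
  · exact card_pos.2 (sdiff_nonempty.2 fun h => hfirst j hj (univ_subset_iff.1 h))
  · intro j hj
    calc dominationNumber G * n (j + 1) + n j
        ≤ dominationNumber G * n (j + 1) + dominationNumber G * gain j :=
          Nat.add_le_add_left (hcover j hj) _
      _ = dominationNumber G * n j := by rw [← mul_add, hsplit]
end
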